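/- arXiv:1703.00272 — 5 statements merged into one kernel-verified Lean document; each statement's English description precedes it below -/
import Mathlib

section
/- Let {y_k}, {u_k}, {a_k}, {b_k} be sequences of nonnegative random variables adapted to a filtration {F_k} such that almost surely Σ a_k < ∞, Σ b_k < ∞, and E[y_{k+1} | F_k] ≤ (1 + a_k) y_k − u_k + b_k for all k. Then almost surely {y_k} converges and Σ u_k < ∞. -/
/-!
With `A_k = ∏_{j<k} (1 + a_j)` and `z_k = y_k / A_k`, the recursion becomes
`E[z_{k+1} | F_k] ≤ z_k - u_k / A_{k+1} + b_k / A_{k+1}`, so `z_k + ∑_{j<k} (u_j - b_j) / A_{j+1}`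
is a supermartingale, except that `u` and `b` need not be integrable. To localize, each increment
is multiplied by the `F_k`-measurable factor `1{∑_{j≤k} (a_j + b_j) ≤ M}`. The localized process
is integrable and bounded below by `-M`, hence converges almost surely. On the event
`∑ (a_j + b_j) ≤ M` the factor is always `1`, and these events exhaust almost every `ω` as `M`
runs through `ℕ`. Convergence of `z_k + ∑_{j<k} u_j / A_{j+1}`, a sum of nonnegative terms, gives
`∑ u_j / A_{j+1} < ∞` and convergence of `z_k`; since `A_k` converges, both
transfer back to `y` and `u`.
-/

open MeasureTheory Filter Topology Finset

theorem mul_le_add_sum_mul_sub {p z : ℕ → ℝ} (hp : Antitone p) (hp0 : p 0 ≤ 1)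
    (hz : ∀ n, 0 ≤ z n) (n : ℕ) :
    p n * z n ≤ z 0 + ∑ j ∈ range n, p (j + 1) * (z (j + 1) - z j) := by
  induction n with
  | zero => simpa using mul_le_of_le_one_left (hz 0) hp0
  | succ n ih =>
    rw [sum_range_succ]
    nlinarith [hp n.le_succ, hz n]

theorem summable_and_exists_tendsto_of_tendsto_add_sum {z v : ℕ → ℝ} (hz : ∀ n, 0 ≤ z n)
    (hv : ∀ n, 0 ≤ v n) {c : ℝ}
    (h : Tendsto (fun n => z n + ∑ j ∈ range n, v j) atTop (𝓝 c)) :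
    Summable v ∧ ∃ l, Tendsto z atTop (𝓝 l) := by
  obtain ⟨C, hC⟩ := h.bddAbove_range
  have hvs : Summable v :=
    summable_of_sum_range_le hv fun n => (le_add_of_nonneg_left (hz n)).trans (hC ⟨n, rfl⟩)
  exact ⟨hvs, c - ∑' j, v j, by simpa using h.sub hvs.hasSum.tendsto_sum_nat⟩

theorem exists_tendsto_and_summable_of_tendsto_div_add_sum_div {A y u : ℕ → ℝ}
    (hA : ∀ n, 0 < A n) {L : ℝ} (hAL : Tendsto A atTop (𝓝 L)) (hy : ∀ n, 0 ≤ y n)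
    (hu : ∀ n, 0 ≤ u n) {c : ℝ}
    (h : Tendsto (fun n => y n / A n + ∑ j ∈ range n, u j / A (j + 1)) atTop (𝓝 c)) :
    (∃ l, Tendsto y atTop (𝓝 l)) ∧ Summable u := by
  obtain ⟨hus, l, hl⟩ := summable_and_exists_tendsto_of_tendsto_add_sum
    (fun n => div_nonneg (hy n) (hA n).le) (fun n => div_nonneg (hu n) (hA (n + 1)).le) h
  obtain ⟨B, hB⟩ := hAL.bddAbove_range
  refine ⟨⟨l * L, (hl.mul hAL).congr fun n => div_mul_cancel₀ _ (hA n).ne'⟩, ?_⟩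
  refine (hus.mul_left B).of_nonneg_of_le hu fun j => ?_
  calc u j = u j / A (j + 1) * A (j + 1) := (div_mul_cancel₀ _ (hA (j + 1)).ne').symm
    _ ≤ B * (u j / A (j + 1)) := by
      rw [mul_comm]
      exact mul_le_mul_of_nonneg_right (hB ⟨j + 1, rfl⟩) (div_nonneg (hu j) (hA (j + 1)).le)

namespace MeasureTheory

variable {Ω : Type*} {m : MeasurableSpace Ω} {μ : Measure Ω} {ℱ : Filtration ℕ m}

theorem Supermartingale.exists_ae_tendsto_of_nonneg [IsFiniteMeasure μ]
    {f : ℕ → Ω → ℝ} (hf : Supermartingale f ℱ μ) (hf0 : ∀ n, 0 ≤ᵐ[μ] f n) :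
    ∀ᵐ ω ∂μ, ∃ c, Tendsto (fun n => f n ω) atTop (𝓝 c) := by
  have hbdd : ∀ n, eLpNorm ((-f) n) 1 μ ≤ (∫ ω, f 0 ω ∂μ).toNNReal := by
    intro n
    have hn : ∫ ω, ‖f n ω‖ ∂μ = ∫ ω, f n ω ∂μ :=
      integral_congr_ae <| (hf0 n).mono fun ω hω => Real.norm_of_nonneg hω
    have hle : ∫ ω, f n ω ∂μ ≤ ∫ ω, f 0 ω ∂μ := by
      simpa using hf.setIntegral_le n.zero_le MeasurableSet.univ
    rw [Pi.neg_apply, eLpNorm_neg, eLpNorm_one_eq_lintegral_enorm,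
      ← ofReal_integral_norm_eq_lintegral_enorm (hf.integrable n), hn]
    exact ENNReal.ofReal_le_ofReal hle
  filter_upwards [hf.neg.exists_ae_tendsto_of_bdd hbdd] with ω ⟨c, hc⟩
  exact ⟨-c, by simpa using hc.neg⟩

theorem supermartingale_add_sum_range [IsFiniteMeasure μ] {X₀ : Ω → ℝ}
    {ξ : ℕ → Ω → ℝ} (hX₀ : StronglyMeasurable[ℱ 0] X₀) (hX₀i : Integrable X₀ μ)
    (hξ : ∀ k, StronglyMeasurable[ℱ (k + 1)] (ξ k)) (hξi : ∀ k, Integrable (ξ k) μ)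
    (hξc : ∀ k, μ[ξ k|ℱ k] ≤ᵐ[μ] 0) :
    Supermartingale (fun n ω => X₀ ω + ∑ j ∈ range n, ξ j ω) ℱ μ := by
  refine supermartingale_of_condExp_sub_nonneg_nat (fun n => ?_) (fun n => ?_) fun k => ?_
  · exact (hX₀.mono (ℱ.mono n.zero_le)).add
      (Finset.stronglyMeasurable_fun_sum _ fun j hj => (hξ j).mono (ℱ.mono (mem_range.1 hj)))
  · exact hX₀i.add (integrable_finsetSum _ fun j _ => hξi j)
  · have hdiff : (fun ω => X₀ ω + ∑ j ∈ range k, ξ j ω)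
        - (fun ω => X₀ ω + ∑ j ∈ range (k + 1), ξ j ω) = -ξ k := by
      funext ω
      simp [sum_range_succ]
    rw [hdiff]
    filter_upwards [condExp_neg (ξ k) (ℱ k), hξc k] with ω h1 h2
    simp only [h1, Pi.neg_apply, Pi.zero_apply]
    exact neg_nonneg.2 h2

end MeasureTheory

namespace RobbinsSiegmund

variable {Ω : Type*}

noncomputable def prodOneAdd (a : ℕ → Ω → ℝ) (k : ℕ) (ω : Ω) : ℝ :=
  ∏ j ∈ range k, (1 + a j ω)

noncomputable def budget (c : ℕ → Ω → ℝ) (M : ℝ) (k : ℕ) (ω : Ω) : ℝ :=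
  if ∑ j ∈ range k, c j ω ≤ M then 1 else 0

noncomputable def increment (y u a b : ℕ → Ω → ℝ) (M : ℝ) (k : ℕ) (ω : Ω) : ℝ :=
  budget (a + b) M (k + 1) ω *
    (y (k + 1) ω / prodOneAdd a (k + 1) ω - y k ω / prodOneAdd a k ω
      + (u k ω - b k ω) / prodOneAdd a (k + 1) ω)

section Pointwise

variable {a b c y u : ℕ → Ω → ℝ} {M : ℝ} {ω : Ω}

@[simp]
theorem prodOneAdd_zero : prodOneAdd a 0 ω = 1 := prod_range_zero _

theorem prodOneAdd_succ (k : ℕ) : prodOneAdd a (k + 1) ω = prodOneAdd a k ω * (1 + a k ω) :=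
  prod_range_succ _ _

theorem one_le_prodOneAdd (ha : ∀ j, 0 ≤ a j ω) (k : ℕ) : 1 ≤ prodOneAdd a k ω :=
  one_le_prod fun j _ => le_add_of_nonneg_right (ha j)

theorem prodOneAdd_pos (ha : ∀ j, 0 ≤ a j ω) (k : ℕ) : 0 < prodOneAdd a k ω :=
  one_pos.trans_le (one_le_prodOneAdd ha k)

theorem tendsto_prodOneAdd (hs : Summable fun j => a j ω) :
    Tendsto (fun k => prodOneAdd a k ω) atTop (𝓝 (∏' j, (1 + a j ω))) :=
  (Real.multipliable_one_add_of_summable hs).hasProd.tendsto_prod_nat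

theorem budget_eq_zero_or_one (k : ℕ) : budget c M k ω = 0 ∨ budget c M k ω = 1 := by
  unfold budget; split_ifs <;> simp

theorem budget_nonneg (k : ℕ) : 0 ≤ budget c M k ω := by
  rcases budget_eq_zero_or_one (c := c) (M := M) (ω := ω) k with h | h <;> simp [h]

theorem budget_le_one (k : ℕ) : budget c M k ω ≤ 1 := by
  rcases budget_eq_zero_or_one (c := c) (M := M) (ω := ω) k with h | h <;> simp [h]

theorem budget_antitone (hc : ∀ j, 0 ≤ c j ω) : Antitone fun k => budget c M k ω := by
  refine antitone_nat_of_succ_le fun k => ?_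
  by_cases h : ∑ j ∈ range (k + 1), c j ω ≤ M
  · have h' : ∑ j ∈ range k, c j ω ≤ M := by
      rw [sum_range_succ] at h
      linarith [hc k]
    simp [budget, h, h']
  · simpa [budget, h] using budget_nonneg k

theorem sum_budget_mul_le (hc : ∀ j, 0 ≤ c j ω) (hM : 0 ≤ M) (n : ℕ) :
    ∑ j ∈ range n, budget c M (j + 1) ω * c j ω ≤ M := by
  induction n with
  | zero => simpa using hM
  | succ n ih =>
    rcases budget_eq_zero_or_one (c := c) (M := M) (ω := ω) (n + 1) with h | h
    · simpa [sum_range_succ, h] using ih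
    · have hsum : ∑ j ∈ range (n + 1), c j ω ≤ M := by simpa [budget] using h
      refine le_trans (sum_le_sum fun j _ => ?_) hsum
      exact mul_le_of_le_one_left (hc j) (budget_le_one _)

theorem budget_mul_le (hc : ∀ j, 0 ≤ c j ω) (hM : 0 ≤ M) (k : ℕ) :
    budget c M (k + 1) ω * c k ω ≤ M :=
  le_trans (single_le_sum (f := fun j => budget c M (j + 1) ω * c j ω)
    (fun j _ => mul_nonneg (budget_nonneg _) (hc j)) (self_mem_range_succ k))
    (sum_budget_mul_le hc hM (k + 1))

theorem budget_eq_one (hc : ∀ j, 0 ≤ c j ω) (hs : Summable fun j => c j ω)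
    (hM : ∑' j, c j ω ≤ M) (k : ℕ) : budget c M k ω = 1 :=
  if_pos ((hs.sum_le_tsum _ fun j _ => hc j).trans hM)

theorem abs_increment_le (ha : ∀ j, 0 ≤ a j ω) (hb : ∀ j, 0 ≤ b j ω) (hy : ∀ j, 0 ≤ y j ω)
    (hM : 0 ≤ M) {k : ℕ} (hu : 0 ≤ u k ω) (hu_le : u k ω ≤ (1 + a k ω) * y k ω + b k ω) :
    |increment y u a b M k ω| ≤ y (k + 1) ω + (2 + M) * y k ω + 2 * M := by
  have hab : ∀ j, 0 ≤ (a + b) j ω := fun j => add_nonneg (ha j) (hb j)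
  have hdiv : ∀ {x : ℝ} (j : ℕ), 0 ≤ x → 0 ≤ x / prodOneAdd a j ω ∧ x / prodOneAdd a j ω ≤ x :=
    fun j hx =>
      ⟨div_nonneg hx (prodOneAdd_pos ha j).le, div_le_self hx (one_le_prodOneAdd ha j)⟩
  obtain ⟨h₁, h₁'⟩ := hdiv (k + 1) (hy (k + 1))
  obtain ⟨h₀, h₀'⟩ := hdiv k (hy k)
  obtain ⟨hu₁, hu₁'⟩ := hdiv (k + 1) hu
  obtain ⟨hb₁, hb₁'⟩ := hdiv (k + 1) (hb k)
  have hyk := hy k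
  have hMy : 0 ≤ M * y k ω := mul_nonneg hM hyk
  rcases budget_eq_zero_or_one (c := a + b) (M := M) (ω := ω) (k + 1) with h | h
  · simp only [increment, h, zero_mul, abs_zero]
    linarith
  · have hbudget : a k ω + b k ω ≤ M := by simpa [h] using budget_mul_le hab hM k
    have hak : a k ω * y k ω ≤ M * y k ω := mul_le_mul_of_nonneg_right (by linarith [hb k]) hyk
    have hak₀ := ha k
    have hbk := hb k
    simp only [increment, h, one_mul, sub_div]
    rw [abs_le]
    constructor <;> linarith

theorem zero_le_add_sum_increment (ha : ∀ j, 0 ≤ a j ω) (hb : ∀ j, 0 ≤ b j ω)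
    (hu : ∀ j, 0 ≤ u j ω) (hy : ∀ j, 0 ≤ y j ω) (hM : 0 ≤ M) (n : ℕ) :
    0 ≤ M + y 0 ω + ∑ j ∈ range n, increment y u a b M j ω := by
  set P := fun k => budget (a + b) M k ω
  set z := fun k => y k ω / prodOneAdd a k ω
  have hab : ∀ j, 0 ≤ (a + b) j ω := fun j => add_nonneg (ha j) (hb j)
  have hz : ∀ k, 0 ≤ z k := fun k => div_nonneg (hy k) (prodOneAdd_pos ha k).le
  have htele := mul_le_add_sum_mul_sub (budget_antitone (M := M) hab) (budget_le_one 0) hz n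
  have hPu : 0 ≤ ∑ j ∈ range n, P (j + 1) * (u j ω / prodOneAdd a (j + 1) ω) :=
    sum_nonneg fun j _ =>
      mul_nonneg (budget_nonneg _) (div_nonneg (hu j) (prodOneAdd_pos ha _).le)
  have hPb : ∑ j ∈ range n, P (j + 1) * (b j ω / prodOneAdd a (j + 1) ω) ≤ M := by
    refine le_trans (sum_le_sum fun j _ => ?_) (sum_budget_mul_le hab hM n)
    refine mul_le_mul_of_nonneg_left ?_ (budget_nonneg _)
    exact (div_le_self (hb j) (one_le_prodOneAdd ha _)).trans (le_add_of_nonneg_left (ha j))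
  have hsplit : ∑ j ∈ range n, increment y u a b M j ω
      = ∑ j ∈ range n, P (j + 1) * (z (j + 1) - z j)
        + ∑ j ∈ range n, P (j + 1) * (u j ω / prodOneAdd a (j + 1) ω)
        - ∑ j ∈ range n, P (j + 1) * (b j ω / prodOneAdd a (j + 1) ω) := by
    rw [← sum_add_distrib, ← sum_sub_distrib]
    refine sum_congr rfl fun j _ => ?_
    simp only [increment, P, z]
    ring
  have hz0 : z 0 = y 0 ω := by simp [z]
  have hPz : 0 ≤ P n * z n := mul_nonneg (budget_nonneg n) (hz n)
  linarith

theorem add_sum_increment_eq (h : ∀ k, budget (a + b) M k ω = 1) (n : ℕ) :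
    y 0 ω + ∑ j ∈ range n, increment y u a b M j ω
      = y n ω / prodOneAdd a n ω + ∑ j ∈ range n, u j ω / prodOneAdd a (j + 1) ω
        - ∑ j ∈ range n, b j ω / prodOneAdd a (j + 1) ω := by
  simp only [increment, h, one_mul, sub_div, add_sub_assoc, sum_add_distrib, sum_sub_distrib,
    sum_range_sub (fun k => y k ω / prodOneAdd a k ω), prodOneAdd_zero, div_one]
  ring

end Pointwise

section Measure

variable {m : MeasurableSpace Ω} {μ : Measure Ω} {ℱ : Filtration ℕ m} {a b c y u : ℕ → Ω → ℝ}
  {M : ℝ}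

theorem measurable_prodOneAdd (ha : Adapted ℱ a) {k n : ℕ} (hn : n ≤ k + 1) :
    Measurable[ℱ k] (prodOneAdd a n) :=
  Finset.measurable_fun_prod _ fun j hj =>
    measurable_const.add (ha.measurable_le (by grind))

theorem measurable_budget (hc : Adapted ℱ c) {k n : ℕ} (hn : n ≤ k + 1) :
    Measurable[ℱ k] (budget c M n) :=
  Measurable.ite (measurableSet_le (Finset.measurable_fun_sum _ fun j hj =>
    hc.measurable_le (by grind)) measurable_const) measurable_const measurable_const

theorem stronglyMeasurable_increment (hy : Adapted ℱ y) (hu : Adapted ℱ u) (ha : Adapted ℱ a)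
    (hb : Adapted ℱ b) (k : ℕ) : StronglyMeasurable[ℱ (k + 1)] (increment y u a b M k) := by
  have hk : k ≤ k + 1 := k.le_succ
  have hy₁ : Measurable[ℱ (k + 1)] (y (k + 1)) := hy (k + 1)
  have hA₁ : Measurable[ℱ (k + 1)] (prodOneAdd a (k + 1)) := measurable_prodOneAdd ha (by omega)
  have hA₀ : Measurable[ℱ (k + 1)] (prodOneAdd a k) := measurable_prodOneAdd ha (by omega)
  refine Measurable.stronglyMeasurable ?_
  exact (measurable_budget (ha.add hb) (by omega)).mul
    (((hy₁.div hA₁).sub ((hy.measurable_le hk).div hA₀)).add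
      (((hu.measurable_le hk).sub (hb.measurable_le hk)).div hA₁))

theorem integrable_increment [IsFiniteMeasure μ] (hy : Adapted ℱ y) (hu : Adapted ℱ u)
    (ha : Adapted ℱ a) (hb : Adapted ℱ b) (hy_int : ∀ k, Integrable (y k) μ)
    (hy₀ : ∀ᵐ ω ∂μ, ∀ j, 0 ≤ y j ω) (hu₀ : ∀ᵐ ω ∂μ, ∀ j, 0 ≤ u j ω)
    (ha₀ : ∀ᵐ ω ∂μ, ∀ j, 0 ≤ a j ω) (hb₀ : ∀ᵐ ω ∂μ, ∀ j, 0 ≤ b j ω) (hM : 0 ≤ M) {k : ℕ}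
    (hrec : ∀ᵐ ω ∂μ, μ[y (k + 1)|ℱ k] ω ≤ (1 + a k ω) * y k ω - u k ω + b k ω) :
    Integrable (increment y u a b M k) μ := by
  refine Integrable.mono' (((hy_int (k + 1)).add ((hy_int k).const_mul (2 + M))).add
    (integrable_const (2 * M))) ((stronglyMeasurable_increment hy hu ha hb k).mono
      (ℱ.le _)).aestronglyMeasurable ?_
  have hce : 0 ≤ᵐ[μ] μ[y (k + 1)|ℱ k] := condExp_nonneg (hy₀.mono fun ω h => h (k + 1))
  filter_upwards [hy₀, hu₀, ha₀, hb₀, hrec, hce] with ω hy hu ha hb hr hc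
  rw [Real.norm_eq_abs]
  have hc' : 0 ≤ μ[y (k + 1)|ℱ k] ω := hc
  exact abs_increment_le ha hb hy hM (hu k) (by linarith)

theorem condExp_increment_nonpos [IsFiniteMeasure μ] (hy : Adapted ℱ y) (hu : Adapted ℱ u)
    (ha : Adapted ℱ a) (hb : Adapted ℱ b) (hy_int : ∀ k, Integrable (y k) μ)
    (ha₀ : ∀ᵐ ω ∂μ, ∀ j, 0 ≤ a j ω) {k : ℕ} (hξ : Integrable (increment y u a b M k) μ)
    (hrec : ∀ᵐ ω ∂μ, μ[y (k + 1)|ℱ k] ω ≤ (1 + a k ω) * y k ω - u k ω + b k ω) :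
    μ[increment y u a b M k|ℱ k] ≤ᵐ[μ] 0 := by
  set F : Ω → ℝ := fun ω => budget (a + b) M (k + 1) ω / prodOneAdd a (k + 1) ω
  set W : Ω → ℝ := fun ω => budget (a + b) M (k + 1) ω *
    (y k ω / prodOneAdd a k ω - (u k ω - b k ω) / prodOneAdd a (k + 1) ω)
  have hP : Measurable[ℱ k] (budget (a + b) M (k + 1)) := measurable_budget (ha.add hb) le_rfl
  have hA₁ : Measurable[ℱ k] (prodOneAdd a (k + 1)) := measurable_prodOneAdd ha le_rfl
  have hA₀ : Measurable[ℱ k] (prodOneAdd a k) := measurable_prodOneAdd ha (by omega)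
  have hF : StronglyMeasurable[ℱ k] F := (hP.div hA₁).stronglyMeasurable
  have hW : StronglyMeasurable[ℱ k] W :=
    (hP.mul (((hy k).div hA₀).sub (((hu k).sub (hb k)).div hA₁))).stronglyMeasurable
  have hξ_eq : increment y u a b M k = F * y (k + 1) - W := by
    funext ω
    simp only [increment, F, W, Pi.mul_apply, Pi.sub_apply]
    ring
  have hFy : Integrable (F * y (k + 1)) μ := by
    refine (hy_int (k + 1)).bdd_mul (c := 1) (hF.mono (ℱ.le k)).aestronglyMeasurable ?_
    filter_upwards [ha₀] with ω ha
    rw [Real.norm_of_nonneg (div_nonneg (budget_nonneg _) (prodOneAdd_pos ha _).le)]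
    exact div_le_one_of_le₀ ((budget_le_one _).trans (one_le_prodOneAdd ha _))
      (prodOneAdd_pos ha _).le
  have hWi : Integrable W μ := by
    rw [← sub_sub_cancel (F * y (k + 1)) W, ← hξ_eq]
    exact hFy.sub hξ
  calc μ[increment y u a b M k|ℱ k]
      =ᵐ[μ] μ[F * y (k + 1)|ℱ k] - μ[W|ℱ k] := by rw [hξ_eq]; exact condExp_sub hFy hWi _
    _ =ᵐ[μ] F * μ[y (k + 1)|ℱ k] - W := by
      refine (condExp_mul_of_stronglyMeasurable_left hF hFy (hy_int _)).sub ?_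
      rw [condExp_of_stronglyMeasurable (ℱ.le k) hW hWi]
    _ ≤ᵐ[μ] 0 := by
      filter_upwards [ha₀, hrec] with ω ha hr
      have hA := prodOneAdd_pos ha k
      have h1a : 0 < 1 + a k ω := by linarith [ha k]
      have hFW : F ω * ((1 + a k ω) * y k ω - u k ω + b k ω) = W ω := by
        simp only [F, W, prodOneAdd_succ]
        field_simp
        ring
      simp only [Pi.sub_apply, Pi.mul_apply, Pi.zero_apply, sub_nonpos]
      exact hFW ▸ mul_le_mul_of_nonneg_left hr
        (div_nonneg (budget_nonneg _) (prodOneAdd_pos ha _).le)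

theorem ae_exists_tendsto_sum_increment [IsFiniteMeasure μ] (hy : Adapted ℱ y)
    (hu : Adapted ℱ u) (ha : Adapted ℱ a) (hb : Adapted ℱ b) (hy_int : ∀ k, Integrable (y k) μ)
    (hy₀ : ∀ᵐ ω ∂μ, ∀ j, 0 ≤ y j ω) (hu₀ : ∀ᵐ ω ∂μ, ∀ j, 0 ≤ u j ω)
    (ha₀ : ∀ᵐ ω ∂μ, ∀ j, 0 ≤ a j ω) (hb₀ : ∀ᵐ ω ∂μ, ∀ j, 0 ≤ b j ω) (hM : 0 ≤ M)
    (hrec : ∀ k, ∀ᵐ ω ∂μ, μ[y (k + 1)|ℱ k] ω ≤ (1 + a k ω) * y k ω - u k ω + b k ω) :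
    ∀ᵐ ω ∂μ, ∃ c, Tendsto (fun n => ∑ j ∈ range n, increment y u a b M j ω) atTop (𝓝 c) := by
  have hξ k := integrable_increment hy hu ha hb hy_int hy₀ hu₀ ha₀ hb₀ hM (hrec k)
  have hX := supermartingale_add_sum_range (X₀ := fun ω => M + y 0 ω)
    (stronglyMeasurable_const.add (hy 0).stronglyMeasurable)
    ((integrable_const M).add (hy_int 0))
    (stronglyMeasurable_increment hy hu ha hb) hξ
    fun k => condExp_increment_nonpos hy hu ha hb hy_int ha₀ (hξ k) (hrec k)
  have hX₀ : ∀ n, 0 ≤ᵐ[μ] fun ω => M + y 0 ω + ∑ j ∈ range n, increment y u a b M j ω :=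
    fun n => by
      filter_upwards [hy₀, hu₀, ha₀, hb₀] with ω hy hu ha hb
      exact zero_le_add_sum_increment ha hb hu hy hM n
  filter_upwards [hX.exists_ae_tendsto_of_nonneg hX₀] with ω ⟨c, hc⟩
  exact ⟨c - (M + y 0 ω), by simpa using hc.sub_const (M + y 0 ω)⟩

end Measure

end RobbinsSiegmund

open RobbinsSiegmund

/-- Robbins–Siegmund almost-supermartingale convergence theorem (Theorem 2.1):
if nonnegative adapted sequences satisfy
`E[y_{k+1} | F_k] ≤ (1 + a_k) y_k - u_k + b_k` with a.s. `Σ a_k < ∞` and `Σ b_k < ∞`,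
then a.s. `{y_k}` converges and `Σ u_k < ∞`. -/
theorem robbins_siegmund
    {Ω : Type*} {m : MeasurableSpace Ω} {μ : Measure Ω} [IsProbabilityMeasure μ]
    (ℱ : Filtration ℕ m)
    (y u a b : ℕ → Ω → ℝ)
    (hy_adapted : Adapted ℱ y) (hu_adapted : Adapted ℱ u)
    (ha_adapted : Adapted ℱ a) (hb_adapted : Adapted ℱ b)
    (hy_int : ∀ k, Integrable (y k) μ)
    (hy_nonneg : ∀ k, 0 ≤ᵐ[μ] y k) (hu_nonneg : ∀ k, 0 ≤ᵐ[μ] u k)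
    (ha_nonneg : ∀ k, 0 ≤ᵐ[μ] a k) (hb_nonneg : ∀ k, 0 ≤ᵐ[μ] b k)
    (ha_sum : ∀ᵐ ω ∂μ, Summable fun k => a k ω)
    (hb_sum : ∀ᵐ ω ∂μ, Summable fun k => b k ω)
    (hrec : ∀ k, ∀ᵐ ω ∂μ, (μ[y (k + 1)|ℱ k]) ω ≤ (1 + a k ω) * y k ω - u k ω + b k ω) :
    ∀ᵐ ω ∂μ, (∃ l : ℝ, Tendsto (fun k => y k ω) atTop (nhds l)) ∧
      Summable fun k => u k ω := by
  have hy₀ := ae_all_iff.2 hy_nonneg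
  have hu₀ := ae_all_iff.2 hu_nonneg
  have ha₀ := ae_all_iff.2 ha_nonneg
  have hb₀ := ae_all_iff.2 hb_nonneg
  have hconv : ∀ᵐ ω ∂μ, ∀ M : ℕ, ∃ c,
      Tendsto (fun n => ∑ j ∈ range n, increment y u a b M j ω) atTop (𝓝 c) :=
    ae_all_iff.2 fun M => ae_exists_tendsto_sum_increment hy_adapted hu_adapted ha_adapted
      hb_adapted hy_int hy₀ hu₀ ha₀ hb₀ M.cast_nonneg hrec
  filter_upwards [hy₀, hu₀, ha₀, hb₀, ha_sum, hb_sum, hconv] with ω hy hu ha hb hsa hsb hconv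
  have hab : ∀ j, 0 ≤ (a + b) j ω := fun j => add_nonneg (ha j) (hb j)
  obtain ⟨M, hM⟩ := exists_nat_ge (∑' j, (a + b) j ω)
  obtain ⟨c, hc⟩ := hconv M
  have hb' : Summable fun j => b j ω / prodOneAdd a (j + 1) ω :=
    hsb.of_nonneg_of_le (fun j => div_nonneg (hb j) (prodOneAdd_pos ha _).le)
      fun j => div_le_self (hb j) (one_le_prodOneAdd ha _)
  refine exists_tendsto_and_summable_of_tendsto_div_add_sum_div (prodOneAdd_pos ha)
    (tendsto_prodOneAdd hsa) hy hu
    (((hc.const_add (y 0 ω)).add hb'.hasSum.tendsto_sum_nat).congr fun n => ?_)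
  rw [add_sum_increment_eq (budget_eq_one hab (hsa.add hsb) hM) n]
  ring
end

section
/- Let {y_k}, {a_k}, {b_k} be sequences of nonnegative random variables adapted to a filtration {F_k} such that almost surely a_k ∈ [0,1], Σ a_k = ∞, Σ b_k < ∞, lim_{k→∞} b_k / a_k = 0, and E[y_{k+1} | F_k] ≤ (1 − a_k) y_k + b_k for all k. Then almost surely y_k converges to zero. -/
/-!
The quantity `y k + ∑ j < k, (a j * y j - b j)` is a supermartingale by the recursion. Stopping `y`
and `b` once the partial sums of `b` exceed a level `n` makes it bounded below, so it converges
almost surely; since `∑ b` is a.s. finite, every `ω` lies below some level, and hence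
`y k + ∑ j < k, a j * y j` converges a.s. (Robbins–Siegmund). Its two nonnegative summands then
converge separately, and `∑ a j * y j < ∞` together with `∑ a j = ∞` forces `lim y = 0`.
-/

open MeasureTheory Filter Finset Topology

theorem summable_of_summable_mul_of_tendsto_pos {a y : ℕ → ℝ} {L : ℝ} (ha : ∀ k, 0 ≤ a k)
    (hay : Summable fun k => a k * y k) (hy : Tendsto y atTop (𝓝 L)) (hL : 0 < L) :
    Summable a := by
  refine (hay.mul_left (2 / L)).of_norm_bounded_eventually_nat ?_
  filter_upwards [hy.eventually (lt_mem_nhds (half_lt_self hL))] with k hk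
  have hk' : 1 ≤ 2 / L * y k := by
    rw [div_mul_eq_mul_div, le_div_iff₀ hL]
    linarith
  rw [Real.norm_of_nonneg (ha k)]
  nlinarith [ha k]

theorem tendsto_zero_of_tendsto_add_sum_mul {a y : ℕ → ℝ} {c : ℝ} (ha : ∀ k, 0 ≤ a k)
    (hy : ∀ k, 0 ≤ y k) (ha_div : ¬ Summable a)
    (h : Tendsto (fun k => y k + ∑ j ∈ range k, a j * y j) atTop (𝓝 c)) :
    Tendsto y atTop (𝓝 0) := by
  obtain ⟨B, hB⟩ := h.bddAbove_range
  have hay : Summable fun j => a j * y j :=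
    summable_of_sum_range_le (fun j => mul_nonneg (ha j) (hy j)) fun k =>
      (le_add_of_nonneg_left (hy k)).trans (hB (Set.mem_range_self k))
  have hlim : Tendsto y atTop (𝓝 (c - ∑' j, a j * y j)) :=
    (h.sub hay.hasSum.tendsto_sum_nat).congr fun k => add_sub_cancel_right _ _
  have hL : c - ∑' j, a j * y j ≤ 0 := not_lt.1 fun hL =>
    ha_div (summable_of_summable_mul_of_tendsto_pos ha hay hlim hL)
  rwa [le_antisymm hL (ge_of_tendsto' hlim hy)] at hlim

theorem sum_range_ite_sum_le {b : ℕ → ℝ} {C : ℝ} (hb : ∀ k, 0 ≤ b k) (hC : 0 ≤ C) (k : ℕ) :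
    ∑ j ∈ range k, (if ∑ i ∈ range (j + 1), b i ≤ C then b j else 0) ≤ C := by
  set s : ℕ → ℝ := fun k => ∑ j ∈ range k, (if ∑ i ∈ range (j + 1), b i ≤ C then b j else 0)
  suffices ∀ k, s k ≤ C ∧ (∑ j ∈ range k, b j ≤ C → s k = ∑ j ∈ range k, b j) from (this k).1
  intro k
  induction k with
  | zero => simpa [s] using hC
  | succ k ih =>
    simp only [s] at ih ⊢
    rw [sum_range_succ]
    split_ifs with hk
    · have hprev : ∑ j ∈ range k, b j ≤ C := by
        rw [sum_range_succ] at hk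
        linarith [hb k]
      rw [ih.2 hprev, ← sum_range_succ]
      exact ⟨hk, fun _ => rfl⟩
    · exact ⟨by simpa using ih.1, fun h => absurd h hk⟩

section

variable {Ω : Type*} {m : MeasurableSpace Ω} {μ : Measure Ω} {ℱ : Filtration ℕ m}

theorem MeasureTheory.Supermartingale.exists_ae_tendsto_of_nonneg_s3 [IsFiniteMeasure μ]
    {f : ℕ → Ω → ℝ} (hf : Supermartingale f ℱ μ) (hf_nonneg : ∀ n, 0 ≤ᵐ[μ] f n) :
    ∀ᵐ ω ∂μ, ∃ c, Tendsto (fun n => f n ω) atTop (𝓝 c) := by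
  have hbdd : ∀ n, eLpNorm ((-f) n) 1 μ ≤ (∫ ω, f 0 ω ∂μ).toNNReal := by
    intro n
    rw [Pi.neg_apply, eLpNorm_neg, eLpNorm_one_eq_lintegral_enorm,
      ← ofReal_integral_norm_eq_lintegral_enorm (hf.integrable n),
      integral_congr_ae ((hf_nonneg n).mono fun ω h => Real.norm_of_nonneg h)]
    exact ENNReal.ofReal_le_ofReal
      (by simpa using hf.setIntegral_le (Nat.zero_le n) MeasurableSet.univ)
  filter_upwards [hf.neg.exists_ae_tendsto_of_bdd hbdd] with ω ⟨c, hc⟩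
  exact ⟨-c, by simpa using hc.neg⟩

theorem supermartingale_add_of_condExp_add_le [IsFiniteMeasure μ] {y D : ℕ → Ω → ℝ}
    (hy : StronglyAdapted ℱ y) (hy_int : ∀ k, Integrable (y k) μ)
    (hD : IsStronglyPredictable ℱ D) (hD_int : ∀ k, Integrable (D k) μ)
    (hle : ∀ k, μ[y (k + 1)|ℱ k] + D (k + 1) ≤ᵐ[μ] y k + D k) :
    Supermartingale (y + D) ℱ μ := by
  refine supermartingale_nat (hy.add hD.stronglyAdapted) (fun k => (hy_int k).add (hD_int k))
    fun k => ?_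
  have hcond : μ[(y + D) (k + 1)|ℱ k] =ᵐ[μ] μ[y (k + 1)|ℱ k] + D (k + 1) := by
    rw [← condExp_of_stronglyMeasurable (ℱ.le k) (hD.measurable_add_one k) (hD_int _)]
    exact condExp_add (hy_int (k + 1)) (hD_int (k + 1)) (ℱ k)
  exact hcond.trans_le (hle k)

section RobbinsSiegmund

variable [IsFiniteMeasure μ] {y a b : ℕ → Ω → ℝ}
  (hy_adapted : Adapted ℱ y) (ha_adapted : Adapted ℱ a) (hb_adapted : Adapted ℱ b)
  (hy_int : ∀ k, Integrable (y k) μ) (hy_nonneg : ∀ k, 0 ≤ᵐ[μ] y k)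
  (hb_nonneg : ∀ k, 0 ≤ᵐ[μ] b k) (ha_mem : ∀ k, ∀ᵐ ω ∂μ, a k ω ∈ Set.Icc (0 : ℝ) 1)
  (hrec : ∀ k, ∀ᵐ ω ∂μ, (μ[y (k + 1)|ℱ k]) ω ≤ (1 - a k ω) * y k ω + b k ω)
include hy_adapted ha_adapted hb_adapted hy_int hy_nonneg hb_nonneg ha_mem hrec

theorem ae_exists_tendsto_add_sum_mul_of_sum_le {C : ℝ}
    (hb_le : ∀ k, ∀ᵐ ω ∂μ, ∑ j ∈ range k, b j ω ≤ C) :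
    ∀ᵐ ω ∂μ, ∃ c, Tendsto (fun k => y k ω + ∑ j ∈ range k, a j ω * y j ω) atTop (𝓝 c) := by
  set D : ℕ → Ω → ℝ := fun k ω => ∑ j ∈ range k, (a j ω * y j ω - b j ω) + C
  have hb_int : ∀ k, Integrable (b k) μ := fun k =>
    Integrable.of_bound hb_adapted.measurable.aestronglyMeasurable C <| by
      filter_upwards [ae_all_iff.2 hb_nonneg, hb_le (k + 1)] with ω hb hle
      rw [Real.norm_of_nonneg (hb k)]
      exact (single_le_sum (fun j _ => hb j) (self_mem_range_succ k)).trans hle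
  have hay_int : ∀ k, Integrable (fun ω => a k ω * y k ω) μ := fun k =>
    (hy_int k).bdd_mul ha_adapted.measurable.aestronglyMeasurable <| by
      filter_upwards [ha_mem k] with ω ha
      rw [Real.norm_of_nonneg ha.1]
      exact ha.2
  have hD_meas : ∀ k, Measurable[ℱ k] (D (k + 1)) := fun k =>
    (Finset.measurable_fun_sum _ fun j hj =>
      have hjk : j ≤ k := Nat.lt_succ_iff.1 (mem_range.1 hj)
      ((ha_adapted.measurable_le hjk).mul (hy_adapted.measurable_le hjk)).sub
        (hb_adapted.measurable_le hjk)).add_const C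
  have hD : IsStronglyPredictable ℱ D :=
    .of_measurable_add_one (by simpa [D] using stronglyMeasurable_const)
      fun k => (hD_meas k).stronglyMeasurable
  have hD_int : ∀ k, Integrable (D k) μ := fun k =>
    (integrable_finsetSum _ fun j _ => (hay_int j).sub (hb_int j)).add (integrable_const C)
  have hW : Supermartingale (y + D) ℱ μ := by
    refine supermartingale_add_of_condExp_add_le hy_adapted.stronglyAdapted hy_int hD hD_int
      fun k => ?_
    filter_upwards [hrec k] with ω hω
    simp only [Pi.add_apply, D, sum_range_succ]
    linarith
  have hW_nonneg : ∀ k, 0 ≤ᵐ[μ] (y + D) k := fun k => by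
    filter_upwards [hy_nonneg k, ae_all_iff.2 hy_nonneg, ae_all_iff.2 ha_mem, hb_le k]
      with ω hyk hy ha hb
    have hay : 0 ≤ ∑ j ∈ range k, a j ω * y j ω :=
      sum_nonneg fun j _ => mul_nonneg (ha j).1 (hy j)
    simp only [Pi.add_apply, Pi.zero_apply, D, sum_sub_distrib] at hyk ⊢
    linarith
  filter_upwards [hW.exists_ae_tendsto_of_nonneg_s3 hW_nonneg, ae_all_iff.2 hb_nonneg,
    ae_all_iff.2 hb_le] with ω ⟨c, hc⟩ hb hbC
  have hb_sum : Summable fun j => b j ω := summable_of_sum_range_le hb hbC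
  refine ⟨c + ∑' j, b j ω - C, (hc.add hb_sum.hasSum.tendsto_sum_nat).sub_const C |>.congr
    fun k => ?_⟩
  simp only [Pi.add_apply, D, sum_sub_distrib]
  ring

theorem ae_exists_tendsto_add_sum_mul_on_sum_le {C : ℝ} (hC : 0 ≤ C) :
    ∀ᵐ ω ∂μ, (∀ k, ∑ j ∈ range k, b j ω ≤ C) →
      ∃ c, Tendsto (fun k => y k ω + ∑ j ∈ range k, a j ω * y j ω) atTop (𝓝 c) := by
  -- stop `y` and `b` as soon as the partial sums of `b` exceed `C`
  set B : ℕ → Set Ω := fun k => {ω | ∑ j ∈ range k, b j ω ≤ C}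
  have hB : ∀ {n k}, n ≤ k + 1 → MeasurableSet[ℱ k] (B n) := fun hnk =>
    measurableSet_le (Finset.measurable_fun_sum _ fun j hj =>
      hb_adapted.measurable_le (by have := mem_range.1 hj; omega)) measurable_const
  set y' : ℕ → Ω → ℝ := fun k => (B k).indicator (y k)
  set b' : ℕ → Ω → ℝ := fun k => (B (k + 1)).indicator (b k)
  have hB_anti : ∀ᵐ ω ∂μ, ∀ k, ω ∈ B (k + 1) → ω ∈ B k := by
    filter_upwards [ae_all_iff.2 hb_nonneg] with ω hb k hk
    simp only [B, Set.mem_ofPred_eq, sum_range_succ] at hk ⊢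
    linarith [show 0 ≤ b k ω from hb k]
  have hb'_le : ∀ k, ∀ᵐ ω ∂μ, ∑ j ∈ range k, b' j ω ≤ C := fun k => by
    filter_upwards [ae_all_iff.2 hb_nonneg] with ω hb
    simpa only [b', Set.indicator_apply, B, Set.mem_ofPred_eq] using
      sum_range_ite_sum_le hb hC k
  have hrec' : ∀ k, ∀ᵐ ω ∂μ, (μ[y' (k + 1)|ℱ k]) ω ≤ (1 - a k ω) * y' k ω + b' k ω := by
    intro k
    filter_upwards [condExp_indicator (hy_int (k + 1)) (hB le_rfl), hrec k, hy_nonneg k,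
      hb_nonneg k, ha_mem k, hB_anti] with ω hce hω hy hb ha hanti
    rw [hce]
    by_cases hk : ω ∈ B (k + 1)
    · simpa only [y', b', Set.indicator_of_mem hk, Set.indicator_of_mem (hanti k hk)] using hω
    · rw [Set.indicator_of_notMem hk]
      exact add_nonneg (mul_nonneg (sub_nonneg.2 ha.2) (Set.indicator_nonneg (fun _ _ => hy) ω))
        (Set.indicator_nonneg (fun _ _ => hb) ω)
  have hconv := ae_exists_tendsto_add_sum_mul_of_sum_le (y := y') (b := b')
    (fun k => (hy_adapted k).indicator (hB k.le_succ)) ha_adapted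
    (fun k => (hb_adapted k).indicator (hB le_rfl))
    (fun k => (hy_int k).indicator (ℱ.le k _ (hB k.le_succ)))
    (fun k => (hy_nonneg k).mono fun ω hω => Set.indicator_nonneg (fun ω _ => hω) ω)
    (fun k => (hb_nonneg k).mono fun ω hω => Set.indicator_nonneg (fun ω _ => hω) ω) ha_mem
    hrec' hb'_le
  filter_upwards [hconv] with ω ⟨c, hc⟩ hω
  have hy' : ∀ k, y' k ω = y k ω := fun k => Set.indicator_of_mem (show ω ∈ B k from hω k) _
  exact ⟨c, hc.congr fun k => by simp only [hy']⟩

theorem ae_exists_tendsto_add_sum_mul_of_summable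
    (hb_sum : ∀ᵐ ω ∂μ, Summable fun k => b k ω) :
    ∀ᵐ ω ∂μ, ∃ c, Tendsto (fun k => y k ω + ∑ j ∈ range k, a j ω * y j ω) atTop (𝓝 c) := by
  have hlevel : ∀ n : ℕ, ∀ᵐ ω ∂μ, (∀ k, ∑ j ∈ range k, b j ω ≤ n) →
      ∃ c, Tendsto (fun k => y k ω + ∑ j ∈ range k, a j ω * y j ω) atTop (𝓝 c) := fun n =>
    ae_exists_tendsto_add_sum_mul_on_sum_le hy_adapted ha_adapted hb_adapted hy_int hy_nonneg
      hb_nonneg ha_mem hrec n.cast_nonneg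
  filter_upwards [ae_all_iff.2 hlevel, hb_sum, ae_all_iff.2 hb_nonneg] with ω hω hs hb
  exact hω ⌈∑' k, b k ω⌉₊ fun k => (hs.sum_le_tsum _ fun j _ => hb j).trans (Nat.le_ceil _)

end RobbinsSiegmund

end

theorem polyak_convergence_to_zero_general
    {Ω : Type*} {m : MeasurableSpace Ω} {μ : Measure Ω} [IsProbabilityMeasure μ]
    (ℱ : Filtration ℕ m)
    (y a b : ℕ → Ω → ℝ)
    (hy_adapted : Adapted ℱ y) (ha_adapted : Adapted ℱ a) (hb_adapted : Adapted ℱ b)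
    (hy_int : ∀ k, Integrable (y k) μ)
    (hy_nonneg : ∀ k, 0 ≤ᵐ[μ] y k) (hb_nonneg : ∀ k, 0 ≤ᵐ[μ] b k)
    (ha_mem : ∀ k, ∀ᵐ ω ∂μ, a k ω ∈ Set.Icc (0 : ℝ) 1)
    (ha_div : ∀ᵐ ω ∂μ, ¬ Summable fun k => a k ω)
    (hb_sum : ∀ᵐ ω ∂μ, Summable fun k => b k ω)
    (hrec : ∀ k, ∀ᵐ ω ∂μ, (μ[y (k + 1)|ℱ k]) ω ≤ (1 - a k ω) * y k ω + b k ω) :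
    ∀ᵐ ω ∂μ, Tendsto (fun k => y k ω) atTop (nhds 0) := by
  filter_upwards [ae_exists_tendsto_add_sum_mul_of_summable hy_adapted ha_adapted hb_adapted
      hy_int hy_nonneg hb_nonneg ha_mem hrec hb_sum,
    ha_div, ae_all_iff.2 ha_mem, ae_all_iff.2 hy_nonneg] with ω ⟨c, hc⟩ hdiv ha hy
  exact tendsto_zero_of_tendsto_add_sum_mul (fun k => (ha k).1) hy hdiv hc

/-- Theorem 2.2 (Polyak): if nonnegative adapted sequences satisfy
`E[y_{k+1} | F_k] ≤ (1 - a_k) y_k + b_k` with a.s. `a_k ∈ [0,1]`, `Σ a_k = ∞`,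
`Σ b_k < ∞` and `b_k / a_k → 0`, then a.s. `y_k → 0`. -/
theorem polyak_convergence_to_zero
    {Ω : Type*} {m : MeasurableSpace Ω} {μ : Measure Ω} [IsProbabilityMeasure μ]
    (ℱ : Filtration ℕ m)
    (y a b : ℕ → Ω → ℝ)
    (hy_adapted : Adapted ℱ y) (ha_adapted : Adapted ℱ a) (hb_adapted : Adapted ℱ b)
    (hy_int : ∀ k, Integrable (y k) μ)
    (hy_nonneg : ∀ k, 0 ≤ᵐ[μ] y k) (hb_nonneg : ∀ k, 0 ≤ᵐ[μ] b k)
    (ha_mem : ∀ k, ∀ᵐ ω ∂μ, a k ω ∈ Set.Icc (0 : ℝ) 1)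
    (ha_div : ∀ᵐ ω ∂μ, ¬ Summable fun k => a k ω)
    (hb_sum : ∀ᵐ ω ∂μ, Summable fun k => b k ω)
    (hba : ∀ᵐ ω ∂μ, Tendsto (fun k => b k ω / a k ω) atTop (nhds 0))
    (hrec : ∀ k, ∀ᵐ ω ∂μ, (μ[y (k + 1)|ℱ k]) ω ≤ (1 - a k ω) * y k ω + b k ω) :
    ∀ᵐ ω ∂μ, Tendsto (fun k => y k ω) atTop (nhds 0) :=
  polyak_convergence_to_zero_general ℱ y a b hy_adapted ha_adapted hb_adapted hy_int hy_nonneg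
    hb_nonneg ha_mem ha_div hb_sum hrec
end

section
/- Let T : ℝⁿ → ℝⁿ be continuous and monotone, X ⊆ ℝⁿ closed and convex, and X* the solution set of the variational inequality VI(T, X). Suppose there exists ρ > 0 such that ⟨T(x*), x − x*⟩ ≥ ρ · dist(x, X*) for all x* ∈ X* and all x ∈ X. Then for every x* ∈ X* and every z ∈ 𝕋_X(x*) ∩ ℕ_{X*}(x*), it holds that ⟨T(x*), z⟩ ≥ ρ‖z‖. -/
open scoped RealInnerProductSpace

/-- The normal cone of a set `C` at a point `x`. -/
def normalCone {n : ℕ} (C : Set (EuclideanSpace ℝ (Fin n))) (x : EuclideanSpace ℝ (Fin n)) :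
    Set (EuclideanSpace ℝ (Fin n)) :=
  {v | ∀ y ∈ C, ⟪v, y - x⟫ ≤ 0}

/-- The tangent cone of a closed convex set `C` at `x ∈ C`:
the closure of `{α (y - x) : α > 0, y ∈ C}`. -/
def tangentCone' {n : ℕ} (C : Set (EuclideanSpace ℝ (Fin n))) (x : EuclideanSpace ℝ (Fin n)) :
    Set (EuclideanSpace ℝ (Fin n)) :=
  closure {d | ∃ t : ℝ, 0 < t ∧ ∃ y ∈ C, d = t • (y - x)}

/-- The solution set `X*` of the variational inequality VI(T, X). -/
def VISol {n : ℕ} (T : EuclideanSpace ℝ (Fin n) → EuclideanSpace ℝ (Fin n))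
    (X : Set (EuclideanSpace ℝ (Fin n))) : Set (EuclideanSpace ℝ (Fin n)) :=
  {p | p ∈ X ∧ ∀ x ∈ X, 0 ≤ ⟪T p, x - p⟫}

/-- Proposition 2.1(i): the weak-sharpness inequality
`⟨T(x*), x - x*⟩ ≥ ρ dist(x, X*)` for all `x* ∈ X*`, `x ∈ X` implies
`⟨T(x*), z⟩ ≥ ρ‖z‖` for every `z ∈ 𝕋_X(x*) ∩ ℕ_{X*}(x*)`. -/
theorem weak_sharp_implies_cone_inequality {n : ℕ}
    (T : EuclideanSpace ℝ (Fin n) → EuclideanSpace ℝ (Fin n))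
    (X : Set (EuclideanSpace ℝ (Fin n)))
    (hT : Continuous T) (hmono : ∀ x y, 0 ≤ ⟪T y - T x, y - x⟫)
    (hXclosed : IsClosed X) (hXconv : Convex ℝ X)
    (ρ : ℝ) (hρ : 0 < ρ)
    (hsharp : ∀ p ∈ VISol T X, ∀ x ∈ X, ρ * Metric.infDist x (VISol T X) ≤ ⟪T p, x - p⟫) :
    ∀ p ∈ VISol T X, ∀ z ∈ tangentCone' X p ∩ normalCone (VISol T X) p,
      ρ * ‖z‖ ≤ ⟪T p, z⟫ := by
  intro p hp z hz
  obtain ⟨hzT, hzN⟩ := hz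
  rcases eq_or_ne z 0 with rfl | hz0
  · simp
  have hzpos : (0:ℝ) < ‖z‖ := norm_pos_iff.mpr hz0
  have hne : (VISol T X).Nonempty := ⟨p, hp⟩
  set c := ρ / ‖z‖ with hc
  have hkey : ∀ d ∈ {d : EuclideanSpace ℝ (Fin n) |
      ∃ t : ℝ, 0 < t ∧ ∃ y ∈ X, d = t • (y - p)},
      c * ⟪z, d⟫ ≤ ⟪T p, d⟫ := by
    rintro d ⟨t, ht, y, hy, rfl⟩
    have h1 : ⟪z, y - p⟫ / ‖z‖ ≤ Metric.infDist y (VISol T X) := by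
      by_contra hlt
      push_neg at hlt
      obtain ⟨q, hq, hdq⟩ := (Metric.infDist_lt_iff hne).mp hlt
      revert hdq
      simp only [imp_false, not_lt]
      have hN : ⟪z, q - p⟫ ≤ 0 := hzN q hq
      have hsplit : ⟪z, y - p⟫ = ⟪z, y - q⟫ + ⟪z, q - p⟫ := by
        rw [← inner_add_right]
        congr 1
        abel
      have hcs : ⟪z, y - q⟫ ≤ ‖z‖ * ‖y - q‖ := real_inner_le_norm z (y - q)
      rw [dist_comm, dist_eq_norm]
      rw [div_le_iff₀ hzpos]
      nlinarith [norm_sub_rev y q]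
    have h2 : ρ * Metric.infDist y (VISol T X) ≤ ⟪T p, y - p⟫ := hsharp p hp y hy
    rw [inner_smul_right, inner_smul_right]
    have hc0 : 0 ≤ c := div_nonneg hρ.le hzpos.le
    have hcz : c * ‖z‖ = ρ := div_mul_cancel₀ ρ hzpos.ne'
    have h3 : c * ⟪z, y - p⟫ ≤ ⟪T p, y - p⟫ := by
      calc c * ⟪z, y - p⟫ ≤ c * (Metric.infDist y (VISol T X) * ‖z‖) :=
              mul_le_mul_of_nonneg_left ((div_le_iff₀ hzpos).mp h1) hc0
        _ = ρ * Metric.infDist y (VISol T X) := by rw [← hcz]; ring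
        _ ≤ ⟪T p, y - p⟫ := h2
    nlinarith
  have hclosed : IsClosed {d : EuclideanSpace ℝ (Fin n) | c * ⟪z, d⟫ ≤ ⟪T p, d⟫} := by
    apply isClosed_le
    · exact continuous_const.mul (continuous_const.inner continuous_id)
    · exact continuous_const.inner continuous_id
  have hzmem : c * ⟪z, z⟫ ≤ ⟪T p, z⟫ := closure_minimal hkey hclosed hzT
  have hzz : ⟪z, z⟫ = ‖z‖ ^ 2 := real_inner_self_eq_norm_sq z
  rw [hzz, hc] at hzmem
  calc ρ * ‖z‖ = ρ / ‖z‖ * ‖z‖ ^ 2 := by field_simp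
    _ ≤ ⟪T p, z⟫ := hzmem
end

section
/- Let T : ℝⁿ → ℝⁿ be continuous and monotone, X ⊆ ℝⁿ closed and convex, and X* the nonempty solution set of VI(T, X). Suppose T is constant on X* and there exists ρ > 0 such that for all x* ∈ X*, ⟨T(x*), z⟩ ≥ ρ‖z‖ for all z ∈ 𝕋_X(x*) ∩ ℕ_{X*}(x*). Then for all x* ∈ X* and all x ∈ X, ⟨T(x*), x − x*⟩ ≥ ρ · dist(x, X*). -/
open scoped RealInnerProductSpace

/-- Minty's lemma: for continuous monotone `T` on convex `X`, the solution set equals the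
"Minty" solution set. -/
lemma VISol_eq_minty {n : ℕ} (T : EuclideanSpace ℝ (Fin n) → EuclideanSpace ℝ (Fin n))
    (X : Set (EuclideanSpace ℝ (Fin n)))
    (hT : Continuous T) (hmono : ∀ x y, 0 ≤ ⟪T y - T x, y - x⟫) (hXconv : Convex ℝ X) :
    VISol T X = {p | p ∈ X ∧ ∀ x ∈ X, 0 ≤ ⟪T x, x - p⟫} := by
  ext p
  constructor
  · rintro ⟨hp, hvi⟩
    refine ⟨hp, fun x hx => ?_⟩
    have h1 := hmono p x
    have h2 := hvi x hx
    rw [inner_sub_left] at h1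
    linarith
  · rintro ⟨hp, hm⟩
    refine ⟨hp, fun x hx => ?_⟩
    set g : ℝ → ℝ := fun t => ⟪T (p + t • (x - p)), x - p⟫ with hgdef
    have hgc : Continuous g := by
      apply Continuous.inner
      · exact hT.comp (continuous_const.add (continuous_id.smul continuous_const))
      · exact continuous_const
    have key : ∀ t ∈ Set.Ioc (0:ℝ) 1, 0 ≤ g t := by
      intro t ht
      have hmem : p + t • (x - p) ∈ X := by
        have h := hXconv hp hx (a := 1 - t) (b := t) (by linarith [ht.2]) (le_of_lt ht.1)
          (by ring)
        convert h using 1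
        rw [sub_smul, one_smul, smul_sub]
        abel
      have h0 := hm _ hmem
      have heq : (p + t • (x - p)) - p = t • (x - p) := by abel
      rw [heq, real_inner_smul_right] at h0
      have ht0 := ht.1
      nlinarith [h0, ht0]
    haveI : (nhdsWithin (0:ℝ) (Set.Ioc 0 1)).NeBot := by
      apply mem_closure_iff_nhdsWithin_neBot.mp
      rw [closure_Ioc (one_ne_zero (α := ℝ)).symm]
      exact ⟨le_refl 0, zero_le_one⟩
    have hlim : Filter.Tendsto g (nhdsWithin (0:ℝ) (Set.Ioc 0 1)) (nhds (g 0)) :=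
      (hgc.continuousAt.continuousWithinAt).tendsto
    have h00 : (0:ℝ) ≤ g 0 :=
      ge_of_tendsto hlim (Filter.eventually_inf_principal.mpr (Filter.Eventually.of_forall key))
    have : g 0 = ⟪T p, x - p⟫ := by
      simp [hgdef]
    linarith [h00, this ▸ h00]

/-- Proposition 2.1(ii): if `T` is constant on the (nonempty) solution set `X*` and
`⟨T(x*), z⟩ ≥ ρ‖z‖` for all `x* ∈ X*` and `z ∈ 𝕋_X(x*) ∩ ℕ_{X*}(x*)`, then
`⟨T(x*), x - x*⟩ ≥ ρ dist(x, X*)` for all `x* ∈ X*` and `x ∈ X`. -/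
theorem cone_inequality_implies_weak_sharp {n : ℕ}
    (T : EuclideanSpace ℝ (Fin n) → EuclideanSpace ℝ (Fin n))
    (X : Set (EuclideanSpace ℝ (Fin n)))
    (hT : Continuous T) (hmono : ∀ x y, 0 ≤ ⟪T y - T x, y - x⟫)
    (hXclosed : IsClosed X) (hXconv : Convex ℝ X)
    (hne : (VISol T X).Nonempty)
    (hconst : ∀ p ∈ VISol T X, ∀ q ∈ VISol T X, T p = T q)
    (ρ : ℝ) (hρ : 0 < ρ)
    (hcone : ∀ p ∈ VISol T X, ∀ z ∈ tangentCone' X p ∩ normalCone (VISol T X) p,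
      ρ * ‖z‖ ≤ ⟪T p, z⟫) :
    ∀ p ∈ VISol T X, ∀ x ∈ X, ρ * Metric.infDist x (VISol T X) ≤ ⟪T p, x - p⟫ := by
  -- closedness of the solution set
  have hclosed : IsClosed (VISol T X) := by
    have heq : VISol T X = X ∩ ⋂ x ∈ X, {p | 0 ≤ ⟪T p, x - p⟫} := by
      ext p
      simp only [VISol, Set.mem_setOf_eq, Set.mem_inter_iff, Set.mem_iInter]
    rw [heq]
    refine hXclosed.inter (isClosed_biInter fun x hx => ?_)
    exact isClosed_le continuous_const
      (Continuous.inner hT (continuous_const.sub continuous_id))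
  -- convexity via Minty's lemma
  have hMinty := VISol_eq_minty T X hT hmono hXconv
  have hconv : Convex ℝ (VISol T X) := by
    rw [hMinty]
    have heq : {p | p ∈ X ∧ ∀ x ∈ X, 0 ≤ ⟪T x, x - p⟫} =
        X ∩ ⋂ x ∈ X, {p | 0 ≤ ⟪T x, x - p⟫} := by
      ext p
      simp only [Set.mem_setOf_eq, Set.mem_inter_iff, Set.mem_iInter]
    rw [heq]
    refine hXconv.inter (convex_iInter fun x => convex_iInter fun hx => ?_)
    intro p hp q hq a b ha hb hab
    simp only [Set.mem_setOf_eq] at hp hq ⊢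
    have h1 : x - (a • p + b • q) = a • (x - p) + b • (x - q) := by
      rw [smul_sub, smul_sub]
      have : a • x + b • x = x := by rw [← add_smul, hab, one_smul]
      rw [show a • x - a • p + (b • x - b • q) = (a • x + b • x) - (a • p + b • q) by abel, this]
    rw [h1, inner_add_right, real_inner_smul_right, real_inner_smul_right]
    have := mul_nonneg ha hp
    have := mul_nonneg hb hq
    linarith
  intro p hp x hx
  -- nearest point in the solution set
  obtain ⟨q, hq, hqd⟩ := hclosed.exists_infDist_eq_dist hne x
  set z := x - q with hz
  -- z is in the tangent cone
  have hzt : z ∈ tangentCone' X q :=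
    subset_closure ⟨1, one_pos, x, hx, by rw [one_smul]⟩
  -- z is in the normal cone, by the projection characterization
  have hzn : z ∈ normalCone (VISol T X) q := by
    intro y hy
    have hiInf : ‖x - q‖ = ⨅ w : (VISol T X), ‖x - w‖ := by
      rw [← dist_eq_norm, ← hqd, Metric.infDist_eq_iInf]
      simp only [dist_eq_norm]
    exact (norm_eq_iInf_iff_real_inner_le_zero hconv hq).mp hiInf y hy
  have hkey := hcone q hq z ⟨hzt, hzn⟩
  have hTpq : T q = T p := hconst q hq p hp
  rw [hTpq] at hkey
  have hdist : Metric.infDist x (VISol T X) = ‖z‖ := by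
    rw [hqd, dist_eq_norm]
  have hsplit : ⟪T p, x - p⟫ = ⟪T p, z⟫ + ⟪T p, q - p⟫ := by
    rw [← inner_add_right]
    congr 1
    rw [hz]
    abel
  have hqp : 0 ≤ ⟪T p, q - p⟫ := hp.2 q hq.1
  rw [hdist, hsplit]
  linarith
end

section
/- Let T : ℝⁿ → ℝⁿ be monotone and L-Lipschitz continuous. Fix m ≥ 1 and a Cartesian decomposition ℝⁿ = ℝ^{n₁} × ⋯ × ℝ^{n_m} with T = (T₁,…,T_m). For positive vectors α = (α₁,…,α_m) and ε = (ε₁,…,ε_m), define the operator H(x) = D(α)(T(x) + D(ε)x), where D(α) is the block-diagonal matrix with blocks α_j I_{n_j}. Then H is σ-strongly monotone with σ = α_min ε_min − L(α_max − α_min), i.e., ⟨H(y) − H(x), y − x⟩ ≥ σ‖y − x‖² for all x, y ∈ ℝⁿ, where α_min, α_max, ε_min are the min/max of the components. -/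
open scoped RealInnerProductSpace

/-- Lemma 4.1 (eventual strong monotonicity): for a monotone `L`-Lipschitz operator `T`
on a Cartesian product `ℝ^{n₁} × ⋯ × ℝ^{n_m}` and positive parameter vectors `α`, `ε`,
the operator `H(x) = D(α)(T(x) + D(ε)x)` (with `D(α)` the block diagonal matrix with
blocks `α_j I_{n_j}`) satisfies
`⟨H(y) - H(x), y - x⟩ ≥ (α_min ε_min - L(α_max - α_min)) ‖y - x‖²`. -/
theorem regularized_operator_strong_monotonicity
    (m : ℕ) (nn : Fin (m + 1) → ℕ) (L : ℝ) (hL : 0 ≤ L)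
    (T : (PiLp 2 fun j : Fin (m + 1) => EuclideanSpace ℝ (Fin (nn j))) →
         PiLp 2 fun j : Fin (m + 1) => EuclideanSpace ℝ (Fin (nn j)))
    (hmono : ∀ x y, 0 ≤ ⟪T y - T x, y - x⟫)
    (hlip : ∀ x y, ‖T y - T x‖ ≤ L * ‖y - x‖)
    (α ε : Fin (m + 1) → ℝ) (hα : ∀ j, 0 < α j) (hε : ∀ j, 0 < ε j)
    (H : (PiLp 2 fun j : Fin (m + 1) => EuclideanSpace ℝ (Fin (nn j))) →
         PiLp 2 fun j : Fin (m + 1) => EuclideanSpace ℝ (Fin (nn j)))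
    (hH : ∀ x, ∀ j, H x j = α j • (T x j + ε j • x j)) :
    ∀ x y : PiLp 2 fun j : Fin (m + 1) => EuclideanSpace ℝ (Fin (nn j)),
      (Finset.univ.inf' Finset.univ_nonempty α * Finset.univ.inf' Finset.univ_nonempty ε
          - L * (Finset.univ.sup' Finset.univ_nonempty α
              - Finset.univ.inf' Finset.univ_nonempty α)) * ‖y - x‖ ^ 2
        ≤ ⟪H y - H x, y - x⟫ := by
  intro x y
  set a := Finset.univ.inf' Finset.univ_nonempty α with ha_def
  set b := Finset.univ.sup' Finset.univ_nonempty α with hb_def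
  set e := Finset.univ.inf' Finset.univ_nonempty ε with he_def
  set d := y - x with hd
  set Δ := T y - T x with hΔ
  have ha : ∀ j, a ≤ α j := fun j => Finset.inf'_le _ (Finset.mem_univ j)
  have hb : ∀ j, α j ≤ b := fun j => Finset.le_sup' _ (Finset.mem_univ j)
  have he : ∀ j, e ≤ ε j := fun j => Finset.inf'_le _ (Finset.mem_univ j)
  have ha0 : 0 < a := (Finset.lt_inf'_iff _).mpr (fun j _ => hα j)
  have he0 : 0 < e := (Finset.lt_inf'_iff _).mpr (fun j _ => hε j)
  have hba : a ≤ b := le_trans (ha 0) (hb 0)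
  have hdj : ∀ j, d j = y j - x j := fun j => rfl
  have hΔj : ∀ j, Δ j = T y j - T x j := fun j => rfl
  have hHsub : ∀ j, (H y - H x) j = α j • (Δ j + ε j • d j) := by
    intro j
    show H y j - H x j = _
    rw [hH, hH, hΔj, hdj]
    module
  have key : ⟪H y - H x, d⟫ = (∑ j, α j * ⟪Δ j, d j⟫) + ∑ j, α j * ε j * ‖d j‖ ^ 2 := by
    rw [PiLp.inner_apply, ← Finset.sum_add_distrib]
    refine Finset.sum_congr rfl fun j _ => ?_
    rw [hHsub j, real_inner_smul_left, inner_add_left, real_inner_smul_left,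
      real_inner_self_eq_norm_sq]
    ring
  have hnd : ‖d‖ ^ 2 = ∑ j, ‖d j‖ ^ 2 := by
    rw [← real_inner_self_eq_norm_sq, PiLp.inner_apply]
    exact Finset.sum_congr rfl fun j _ => real_inner_self_eq_norm_sq _
  have hnΔ : ‖Δ‖ ^ 2 = ∑ j, ‖Δ j‖ ^ 2 := by
    rw [← real_inner_self_eq_norm_sq, PiLp.inner_apply]
    exact Finset.sum_congr rfl fun j _ => real_inner_self_eq_norm_sq _
  have hinner : ⟪Δ, d⟫ = ∑ j, ⟪Δ j, d j⟫ := PiLp.inner_apply _ _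
  -- Cauchy-Schwarz for sums
  have hCS : ∑ j, ‖Δ j‖ * ‖d j‖ ≤ ‖Δ‖ * ‖d‖ := by
    have hS0 : 0 ≤ ∑ j, ‖Δ j‖ * ‖d j‖ :=
      Finset.sum_nonneg fun j _ => mul_nonneg (norm_nonneg _) (norm_nonneg _)
    have hsq := Finset.sum_mul_sq_le_sq_mul_sq Finset.univ
      (fun j => ‖Δ j‖) (fun j => ‖d j‖)
    rw [← hnΔ, ← hnd] at hsq
    nlinarith [mul_nonneg (norm_nonneg Δ) (norm_nonneg d), hsq, hS0]
  have S1 : a * ⟪Δ, d⟫ - (b - a) * (∑ j, ‖Δ j‖ * ‖d j‖) ≤ ∑ j, α j * ⟪Δ j, d j⟫ := by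
    rw [hinner, Finset.mul_sum, Finset.mul_sum, ← Finset.sum_sub_distrib]
    refine Finset.sum_le_sum fun j _ => ?_
    nlinarith [neg_abs_le ⟪Δ j, d j⟫, le_abs_self ⟪Δ j, d j⟫,
      abs_real_inner_le_norm (Δ j) (d j), ha j, hb j,
      mul_nonneg (norm_nonneg (Δ j)) (norm_nonneg (d j))]
  have S2 : a * e * ‖d‖ ^ 2 ≤ ∑ j, α j * ε j * ‖d j‖ ^ 2 := by
    rw [hnd, Finset.mul_sum]
    refine Finset.sum_le_sum fun j _ => ?_
    exact mul_le_mul_of_nonneg_right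
      (mul_le_mul (ha j) (he j) he0.le (hα j).le) (sq_nonneg _)
  have hΔd : ‖Δ‖ * ‖d‖ ≤ L * ‖d‖ ^ 2 := by
    have h := hlip x y
    nlinarith [norm_nonneg d, norm_nonneg Δ]
  have hsum : ∑ j, ‖Δ j‖ * ‖d j‖ ≤ L * ‖d‖ ^ 2 := hCS.trans hΔd
  have hmul : (b - a) * (∑ j, ‖Δ j‖ * ‖d j‖) ≤ (b - a) * (L * ‖d‖ ^ 2) :=
    mul_le_mul_of_nonneg_left hsum (sub_nonneg.mpr hba)
  have hm0 : 0 ≤ a * ⟪Δ, d⟫ := mul_nonneg ha0.le (hmono x y)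
  rw [key]
  linarith [S1, S2, hmul, hm0]
end
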